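/- Termination criterion certifies ε-accuracy: let φ : [a, b] → ℝ be Lipschitz with partition points a₀ < ⋯ < a_{n+1}, valid local Lipschitz constants lᵢ, characteristic values Rᵢ as above, R_min = minᵢ Rᵢ and φ̂_min = minᵢ φ(aᵢ). If φ̂_min − R_min ≤ ε, then R_min ≤ min_{x∈[a,b]} φ(x) ≤ R_min + ε. -/

import Mathlib

/-!
On each cell `[u, v]` the Lipschitz bounds at the two endpoints, `φ x ≥ φ u - L (x - u)` and
`φ x ≥ φ v - L (v - x)`, average to `φ x ≥ R`, where `R` is the characteristic value of the
cell. Since the cells cover `[a₀, aₙ₊₁]`, the smallest characteristic value is a lower bound for `φ`,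
and the best sampled point `aᵢ` witnesses a value within `ε` of it.
-/

open Set

/-- The paper's `Rᵢ`: the height where the cones `φ u - L (x - u)` and `φ v - L (v - x)` meet. -/
noncomputable def characteristicValue (φ : ℝ → ℝ) (u v L : ℝ) : ℝ :=
  (φ u + φ v) / 2 + L * (u - v) / 2

theorem characteristicValue_le {φ : ℝ → ℝ} {u v L x : ℝ}
    (hφ : ∀ x ∈ Icc u v, ∀ y ∈ Icc u v, |φ x - φ y| ≤ L * |x - y|) (hx : x ∈ Icc u v) :
    characteristicValue φ u v L ≤ φ x := by
  have huv : u ≤ v := hx.1.trans hx.2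
  have hu := neg_le_of_abs_le (hφ x hx u (left_mem_Icc.2 huv))
  have hv := neg_le_of_abs_le (hφ x hx v (right_mem_Icc.2 huv))
  rw [abs_of_nonneg (sub_nonneg.2 hx.1)] at hu
  rw [abs_of_nonpos (sub_nonpos.2 hx.2)] at hv
  unfold characteristicValue
  linarith

theorem Monotone.exists_mem_Icc_castSucc_succ {α : Type*} [LinearOrder α] :
    ∀ {n : ℕ} {a : Fin (n + 2) → α}, Monotone a → ∀ {x : α}, x ∈ Icc (a 0) (a (Fin.last (n + 1))) →
      ∃ i : Fin (n + 1), x ∈ Icc (a i.castSucc) (a i.succ)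
  | 0, _, _, _, hx => ⟨0, hx⟩
  | n + 1, a, ha, x, hx => by
    by_cases hlast : x ≤ a (Fin.last (n + 1)).castSucc
    · obtain ⟨i, hi⟩ := exists_mem_Icc_castSucc_succ (a := Fin.init a)
        (ha.comp Fin.strictMono_castSucc.monotone) ⟨hx.1, hlast⟩
      exact ⟨i.castSucc, hi⟩
    · exact ⟨Fin.last (n + 1), (not_le.1 hlast).le, hx.2⟩

theorem termination_eps_accuracy_general (φ : ℝ → ℝ) (n : ℕ) (a : Fin (n + 2) → ℝ)
    (hmono : StrictMono a)
    (l : Fin (n + 1) → ℝ)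
    (hlip : ∀ i : Fin (n + 1), ∀ x ∈ Set.Icc (a i.castSucc) (a i.succ),
      ∀ y ∈ Set.Icc (a i.castSucc) (a i.succ), |φ x - φ y| ≤ l i * |x - y|)
    (ε : ℝ)
    (hterm :
      Finset.univ.inf' Finset.univ_nonempty (fun i : Fin (n + 2) => φ (a i)) -
        Finset.univ.inf' Finset.univ_nonempty
          (fun i : Fin (n + 1) =>
            (φ (a i.castSucc) + φ (a i.succ)) / 2 +
              l i * (a i.castSucc - a i.succ) / 2) ≤ ε) :
    (∀ x ∈ Set.Icc (a 0) (a (Fin.last (n + 1))),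
      Finset.univ.inf' Finset.univ_nonempty
        (fun i : Fin (n + 1) =>
          (φ (a i.castSucc) + φ (a i.succ)) / 2 +
            l i * (a i.castSucc - a i.succ) / 2) ≤ φ x) ∧
    (∃ x ∈ Set.Icc (a 0) (a (Fin.last (n + 1))),
      φ x ≤ Finset.univ.inf' Finset.univ_nonempty
        (fun i : Fin (n + 1) =>
          (φ (a i.castSucc) + φ (a i.succ)) / 2 +
            l i * (a i.castSucc - a i.succ) / 2) + ε) := by
  refine ⟨fun x hx => ?_, ?_⟩
  · obtain ⟨i, hi⟩ := hmono.monotone.exists_mem_Icc_castSucc_succ hx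
    exact (Finset.inf'_le (fun i => characteristicValue φ (a i.castSucc) (a i.succ) (l i))
      (Finset.mem_univ i)).trans (characteristicValue_le (hlip i) hi)
  · obtain ⟨i, -, hi⟩ := Finset.exists_mem_eq_inf' Finset.univ_nonempty (fun i => φ (a i))
    refine ⟨a i, ⟨hmono.monotone (Fin.zero_le i), hmono.monotone (Fin.le_last i)⟩, ?_⟩
    linarith

/-- Termination criterion certifies ε-accuracy: if `φ̂_min − R_min ≤ ε` then
`R_min ≤ min_{x∈[a,b]} φ(x) ≤ R_min + ε`. -/
theorem termination_eps_accuracy (φ : ℝ → ℝ) (n : ℕ) (a : Fin (n + 2) → ℝ)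
    (hmono : StrictMono a)
    (l : Fin (n + 1) → ℝ) (hl : ∀ i, 0 ≤ l i)
    (hlip : ∀ i : Fin (n + 1), ∀ x ∈ Set.Icc (a i.castSucc) (a i.succ),
      ∀ y ∈ Set.Icc (a i.castSucc) (a i.succ), |φ x - φ y| ≤ l i * |x - y|)
    (ε : ℝ)
    (hterm :
      Finset.univ.inf' Finset.univ_nonempty (fun i : Fin (n + 2) => φ (a i)) -
        Finset.univ.inf' Finset.univ_nonempty
          (fun i : Fin (n + 1) =>
            (φ (a i.castSucc) + φ (a i.succ)) / 2 +
              l i * (a i.castSucc - a i.succ) / 2) ≤ ε) :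
    (∀ x ∈ Set.Icc (a 0) (a (Fin.last (n + 1))),
      Finset.univ.inf' Finset.univ_nonempty
        (fun i : Fin (n + 1) =>
          (φ (a i.castSucc) + φ (a i.succ)) / 2 +
            l i * (a i.castSucc - a i.succ) / 2) ≤ φ x) ∧
    (∃ x ∈ Set.Icc (a 0) (a (Fin.last (n + 1))),
      φ x ≤ Finset.univ.inf' Finset.univ_nonempty
        (fun i : Fin (n + 1) =>
          (φ (a i.castSucc) + φ (a i.succ)) / 2 +
            l i * (a i.castSucc - a i.succ) / 2) + ε) :=
  termination_eps_accuracy_general φ n a hmono l hlip ε hterm
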